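/- In the setting of the estimated Perron–Frobenius operator on an RKHM over ℂ^{m×m}: suppose the complex kernel k̃ is continuous, Y is dense in X^m, the exact Gram–Schmidt (ε = 0) orthonormal system {q_t}_{t=0}^∞ is built from {φ(x_t)}_{x_t ∈ Y}, and the Perron–Frobenius operator K is a bounded ℂ^{m×m}-linear map on M_k. Then the orthonormal system {q_t} is an orthonormal basis of M_k, and the compressions Q_T Q_T* K Q_T Q_T* converge strongly to K as T → ∞; that is, for every v ∈ M_k, ‖K v − Q_T Q_T* K Q_T Q_T* v‖_k → 0. -/

import Mathlib

open scoped Matrix.Norms.L2Operator ComplexOrder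

/-- A Hilbert C*-module over the C*-algebra `ℂ^{m×m}` of `m × m` complex matrices (with the
operator norm): a right module with a matrix-valued inner product inducing the norm of `M`. -/
structure HilbertModuleMat (m : ℕ) (M : Type*) [NormedAddCommGroup M] where
  smul : M → Matrix (Fin m) (Fin m) ℂ → M
  inner : M → M → Matrix (Fin m) (Fin m) ℂ
  smul_add_vec : ∀ (u v : M) c, smul (u + v) c = smul u c + smul v c
  smul_add_alg : ∀ (u : M) c d, smul u (c + d) = smul u c + smul u d
  smul_mul : ∀ (u : M) c d, smul u (c * d) = smul (smul u c) d
  smul_one : ∀ u : M, smul u 1 = u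
  inner_add_right : ∀ u v w : M, inner u (v + w) = inner u v + inner u w
  inner_smul_right : ∀ (u v : M) c, inner u (smul v c) = inner u v * c
  inner_conj : ∀ u v : M, inner v u = star (inner u v)
  inner_self_posSemidef : ∀ u : M, (inner u u).PosSemidef
  inner_definite : ∀ u : M, inner u u = 0 → u = 0
  norm_eq : ∀ u : M, ‖u‖ = Real.sqrt ‖inner u u‖

/-- A vector `q` is *normalized* if `⟨q,q⟩` is a nonzero idempotent. -/
def HilbertModuleMat.Normalized {m : ℕ} {M : Type*} [NormedAddCommGroup M]
    (h : HilbertModuleMat m M) (q : M) : Prop :=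
  h.inner q q ≠ 0 ∧ h.inner q q * h.inner q q = h.inner q q

/-! Every `φ (x t)` lies in the span of `{q_t}`; the closure of that span is again closed under
addition and right multiplication, and by continuity of `φ` and density of the orbit it contains
every `φ y`, so the span is dense. Orthogonality makes `Q_T Q_T*` a contraction giving the best
approximation from `q_0, …, q_{T-1}`, hence `Q_T Q_T* → id` strongly, and then
`‖K v - P K P v‖ ≤ ‖K v - P K v‖ + C ‖v - P v‖` with `P = Q_T Q_T*`. -/

open Filter Topology

open scoped MatrixOrder in
lemma Matrix.norm_le_norm_add_of_posSemidef {n : Type*} [Fintype n] [DecidableEq n]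
    {A B : Matrix n n ℂ} (hA : A.PosSemidef) (hB : B.PosSemidef) : ‖A‖ ≤ ‖A + B‖ := by
  refine CStarAlgebra.norm_le_norm_of_nonneg_of_le hA.nonneg ?_
  rw [Matrix.le_iff, add_sub_cancel_left]
  exact hB

lemma AddMonoidHom.tendsto_comp_comp_of_tendsto {ι M : Type*} [NormedAddCommGroup M]
    {l : Filter ι} {P : ι → M →+ M} (hPnorm : ∀ i u, ‖P i u‖ ≤ ‖u‖)
    (hP : ∀ u, Tendsto (fun i => P i u) l (𝓝 u)) (K : M →+ M) {C : ℝ}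
    (hK : ∀ u, ‖K u‖ ≤ C * ‖u‖) (v : M) :
    Tendsto (fun i => P i (K (P i v))) l (𝓝 (K v)) := by
  have hbound : ∀ i, ‖P i (K (P i v)) - K v‖ ≤ C * ‖P i v - v‖ + ‖P i (K v) - K v‖ := by
    intro i
    calc ‖P i (K (P i v)) - K v‖ = ‖P i (K (P i v - v)) + (P i (K v) - K v)‖ := by
          rw [map_sub, map_sub]; abel
      _ ≤ ‖K (P i v - v)‖ + ‖P i (K v) - K v‖ := (norm_add_le _ _).trans (by grw [hPnorm])
      _ ≤ C * ‖P i v - v‖ + ‖P i (K v) - K v‖ := by grw [hK]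
  have hlim : Tendsto (fun i => C * ‖P i v - v‖ + ‖P i (K v) - K v‖) l (𝓝 0) := by
    simpa using ((tendsto_iff_norm_sub_tendsto_zero.mp (hP v)).const_mul C).add
      (tendsto_iff_norm_sub_tendsto_zero.mp (hP (K v)))
  exact tendsto_iff_norm_sub_tendsto_zero.mpr
    (squeeze_zero (fun _ => norm_nonneg _) hbound hlim)

namespace HilbertModuleMat

variable {m : ℕ} {M : Type*} [NormedAddCommGroup M] (h : HilbertModuleMat m M)

def smulVec (c : Matrix (Fin m) (Fin m) ℂ) : M →+ M :=
  AddMonoidHom.mk' (h.smul · c) fun u v => h.smul_add_vec u v c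

def smulAlg (u : M) : Matrix (Fin m) (Fin m) ℂ →+ M :=
  AddMonoidHom.mk' (h.smul u) (h.smul_add_alg u)

def innerRight (u : M) : M →+ Matrix (Fin m) (Fin m) ℂ :=
  AddMonoidHom.mk' (h.inner u) (h.inner_add_right u)

lemma smul_zero_alg (u : M) : h.smul u 0 = 0 :=
  map_zero (h.smulAlg u)

lemma smul_sub_alg (u : M) (c d : Matrix (Fin m) (Fin m) ℂ) :
    h.smul u (c - d) = h.smul u c - h.smul u d :=
  map_sub (h.smulAlg u) c d

lemma smul_sum_vec {ι : Type*} (s : Finset ι) (f : ι → M) (c : Matrix (Fin m) (Fin m) ℂ) :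
    h.smul (∑ t ∈ s, f t) c = ∑ t ∈ s, h.smul (f t) c :=
  map_sum (h.smulVec c) f s

lemma inner_sub_right (u v w : M) : h.inner u (v - w) = h.inner u v - h.inner u w :=
  map_sub (h.innerRight u) v w

lemma inner_sum_right {ι : Type*} (u : M) (s : Finset ι) (f : ι → M) :
    h.inner u (∑ t ∈ s, f t) = ∑ t ∈ s, h.inner u (f t) :=
  map_sum (h.innerRight u) f s

lemma inner_add_left (u v w : M) : h.inner (u + v) w = h.inner u w + h.inner v w := by
  rw [h.inner_conj, h.inner_add_right, star_add, ← h.inner_conj, ← h.inner_conj]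

lemma inner_sub_left (u v w : M) : h.inner (u - v) w = h.inner u w - h.inner v w := by
  rw [h.inner_conj, h.inner_sub_right, star_sub, ← h.inner_conj, ← h.inner_conj]

lemma inner_sum_left {ι : Type*} (s : Finset ι) (f : ι → M) (u : M) :
    h.inner (∑ t ∈ s, f t) u = ∑ t ∈ s, h.inner (f t) u := by
  rw [h.inner_conj, h.inner_sum_right, star_sum]
  exact Finset.sum_congr rfl fun t _ => (h.inner_conj _ _).symm

lemma inner_smul_left (u v : M) (c : Matrix (Fin m) (Fin m) ℂ) :
    h.inner (h.smul u c) v = star c * h.inner u v := by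
  rw [h.inner_conj, h.inner_smul_right, StarMul.star_mul, ← h.inner_conj]

lemma star_inner_self (u : M) : star (h.inner u u) = h.inner u u :=
  (h.inner_self_posSemidef u).isHermitian.eq

lemma norm_smul_le (u : M) (c : Matrix (Fin m) (Fin m) ℂ) : ‖h.smul u c‖ ≤ ‖u‖ * ‖c‖ := by
  have hinner : ‖h.inner (h.smul u c) (h.smul u c)‖ ≤ ‖h.inner u u‖ * ‖c‖ ^ 2 :=
    calc ‖h.inner (h.smul u c) (h.smul u c)‖ = ‖star c * h.inner u u * c‖ := by
          rw [h.inner_smul_right, h.inner_smul_left]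
      _ ≤ ‖star c‖ * ‖h.inner u u‖ * ‖c‖ := by grw [norm_mul_le, norm_mul_le]
      _ = ‖h.inner u u‖ * ‖c‖ ^ 2 := by
          rw [Matrix.star_eq_conjTranspose, Matrix.l2_opNorm_conjTranspose]; ring
  calc ‖h.smul u c‖ ≤ Real.sqrt (‖h.inner u u‖ * ‖c‖ ^ 2) := by
        rw [h.norm_eq]; exact Real.sqrt_le_sqrt hinner
    _ = ‖u‖ * ‖c‖ := by
        rw [Real.sqrt_mul (norm_nonneg _), Real.sqrt_sq (norm_nonneg _), ← h.norm_eq]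

lemma continuous_smul_vec (c : Matrix (Fin m) (Fin m) ℂ) : Continuous (h.smul · c) :=
  AddMonoidHomClass.continuous_of_bound (h.smulVec c) ‖c‖ fun u => by
    rw [mul_comm]; exact h.norm_smul_le u c

lemma norm_le_norm_add_of_inner_eq_zero {u v : M} (huv : h.inner u v = 0) :
    ‖u‖ ≤ ‖u + v‖ := by
  have hvu : h.inner v u = 0 := by rw [h.inner_conj, huv, star_zero]
  have hpyth : h.inner (u + v) (u + v) = h.inner u u + h.inner v v := by
    rw [h.inner_add_right, h.inner_add_left, h.inner_add_left, huv, hvu, add_zero, zero_add]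
  rw [h.norm_eq, h.norm_eq, hpyth]
  exact Real.sqrt_le_sqrt (Matrix.norm_le_norm_add_of_posSemidef
    (h.inner_self_posSemidef u) (h.inner_self_posSemidef v))

lemma isIdempotentElem_inner_self {q : M} (hq : q = 0 ∨ h.Normalized q) :
    IsIdempotentElem (h.inner q q) := by
  rcases hq with rfl | ⟨_, hidem⟩
  · rw [show h.inner 0 0 = 0 from map_zero (h.innerRight 0)]
    exact IsIdempotentElem.zero
  · exact hidem

lemma smul_inner_self_of_isIdempotentElem {q : M} (hq : IsIdempotentElem (h.inner q q)) :
    h.smul q (h.inner q q) = q := by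
  have hzero : h.inner (q - h.smul q (h.inner q q)) (q - h.smul q (h.inner q q)) = 0 := by
    rw [h.inner_sub_right, h.inner_sub_left, h.inner_sub_left, h.inner_smul_right,
      h.inner_smul_left, h.inner_smul_left, h.inner_smul_right, h.star_inner_self,
      ← mul_assoc, hq.eq, hq.eq]
    abel
  exact (sub_eq_zero.mp (h.inner_definite _ hzero)).symm

lemma inner_self_mul_inner_of_isIdempotentElem {q : M} (hq : IsIdempotentElem (h.inner q q))
    (v : M) : h.inner q q * h.inner q v = h.inner q v := by
  conv_rhs => rw [← h.smul_inner_self_of_isIdempotentElem hq]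
  rw [h.inner_smul_left, h.star_inner_self]

lemma dense_of_feature_mem {Y : Type*} [TopologicalSpace Y] {φ : Y → M} (hφ : Continuous φ)
    (hφdense : Dense {v : M | ∃ (n : ℕ) (y : Fin n → Y) (c : Fin n → Matrix (Fin m) (Fin m) ℂ),
      v = ∑ t, h.smul (φ (y t)) (c t)})
    {S : AddSubmonoid M} (hS : ∀ u ∈ S, ∀ c, h.smul u c ∈ S)
    {D : Set Y} (hD : Dense D) (hDS : ∀ y ∈ D, φ y ∈ S) : Dense (S : Set M) := by
  have hsmul : ∀ u ∈ S.topologicalClosure, ∀ c, h.smul u c ∈ S.topologicalClosure :=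
    fun u hu c => map_mem_closure (f := (h.smul · c)) (h.continuous_smul_vec c) hu
      fun v hv => hS v hv c
  have hφmem : ∀ y, φ y ∈ S.topologicalClosure :=
    hD.induction (fun y hy => S.le_topologicalClosure (hDS y hy))
      (isClosed_closure.preimage hφ)
  refine dense_closure.mp (hφdense.mono ?_)
  rintro _ ⟨n, y, c, rfl⟩
  exact S.topologicalClosure.sum_mem fun t _ => hsmul _ (hφmem (y t)) (c t)

/-- Orthonormality in the Hilbert C*-module sense: each `⟨q_t, q_t⟩` is a (possibly zero)
projection. -/
structure IsOrthonormal {ι : Type*} (q : ι → M) : Prop where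
  inner_eq_zero : ∀ s t, s ≠ t → h.inner (q s) (q t) = 0
  isIdempotentElem : ∀ t, IsIdempotentElem (h.inner (q t) (q t))

variable (q : ℕ → M)

lemma sum_smul_eq_sum_smul_ite {s s' : Finset ℕ} (hs : s ⊆ s')
    (c : ℕ → Matrix (Fin m) (Fin m) ℂ) :
    ∑ t ∈ s, h.smul (q t) (c t) = ∑ t ∈ s', h.smul (q t) (if t ∈ s then c t else 0) := by
  rw [← Finset.sum_subset hs fun t _ ht => by rw [if_neg ht, h.smul_zero_alg]]
  exact Finset.sum_congr rfl fun t ht => by rw [if_pos ht]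

def span : AddSubmonoid M where
  carrier := {v | ∃ (s : Finset ℕ) (c : ℕ → Matrix (Fin m) (Fin m) ℂ),
    v = ∑ t ∈ s, h.smul (q t) (c t)}
  zero_mem' := ⟨∅, 0, by simp⟩
  add_mem' := by
    rintro _ _ ⟨s₁, c₁, rfl⟩ ⟨s₂, c₂, rfl⟩
    refine ⟨s₁ ∪ s₂, fun t => (if t ∈ s₁ then c₁ t else 0) + (if t ∈ s₂ then c₂ t else 0), ?_⟩
    simp only [h.smul_add_alg, Finset.sum_add_distrib]
    rw [h.sum_smul_eq_sum_smul_ite q (s := s₁) Finset.subset_union_left,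
      h.sum_smul_eq_sum_smul_ite q (s := s₂) Finset.subset_union_right]

lemma mem_span_self (t : ℕ) : q t ∈ h.span q :=
  ⟨{t}, fun _ => 1, by rw [Finset.sum_singleton, h.smul_one]⟩

lemma smul_mem_span {u : M} (hu : u ∈ h.span q) (c : Matrix (Fin m) (Fin m) ℂ) :
    h.smul u c ∈ h.span q := by
  obtain ⟨s, d, rfl⟩ := hu
  exact ⟨s, fun t => d t * c, by simp only [h.smul_sum_vec, h.smul_mul]⟩

def proj (T : ℕ) : M →+ M :=
  AddMonoidHom.mk' (fun v => ∑ t ∈ Finset.range T, h.smul (q t) (h.inner (q t) v)) fun u v => by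
    simp only [h.inner_add_right, h.smul_add_alg, Finset.sum_add_distrib]

lemma proj_apply (T : ℕ) (v : M) :
    h.proj q T v = ∑ t ∈ Finset.range T, h.smul (q t) (h.inner (q t) v) :=
  rfl

variable {h q}

lemma IsOrthonormal.inner_sub_proj_eq_zero (hq : h.IsOrthonormal q) (v : M) {T t : ℕ}
    (ht : t < T) : h.inner (q t) (v - h.proj q T v) = 0 := by
  rw [h.inner_sub_right, proj_apply, h.inner_sum_right,
    Finset.sum_eq_single t
      (fun s _ hst => by rw [h.inner_smul_right, hq.inner_eq_zero t s (Ne.symm hst), zero_mul])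
      (fun htT => absurd (Finset.mem_range.mpr ht) htT),
    h.inner_smul_right, h.inner_self_mul_inner_of_isIdempotentElem (hq.isIdempotentElem t),
    sub_self]

lemma inner_sum_smul_eq_zero {s : Finset ℕ} (c : ℕ → Matrix (Fin m) (Fin m) ℂ) {d : M}
    (hd : ∀ t ∈ s, h.inner (q t) d = 0) : h.inner (∑ t ∈ s, h.smul (q t) (c t)) d = 0 := by
  rw [h.inner_sum_left]
  exact Finset.sum_eq_zero fun t ht => by rw [h.inner_smul_left, hd t ht, mul_zero]

lemma IsOrthonormal.inner_sum_smul_sub_proj_eq_zero (hq : h.IsOrthonormal q) (T : ℕ)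
    (c : ℕ → Matrix (Fin m) (Fin m) ℂ) (v : M) :
    h.inner (∑ t ∈ Finset.range T, h.smul (q t) (c t)) (v - h.proj q T v) = 0 :=
  inner_sum_smul_eq_zero c fun _ ht => hq.inner_sub_proj_eq_zero v (Finset.mem_range.mp ht)

lemma IsOrthonormal.norm_sub_proj_le (hq : h.IsOrthonormal q) (v : M) (T : ℕ)
    (c : ℕ → Matrix (Fin m) (Fin m) ℂ) :
    ‖v - h.proj q T v‖ ≤ ‖v - ∑ t ∈ Finset.range T, h.smul (q t) (c t)‖ := by
  have hsplit : v - ∑ t ∈ Finset.range T, h.smul (q t) (c t) = (v - h.proj q T v) +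
      ∑ t ∈ Finset.range T, h.smul (q t) (h.inner (q t) v - c t) := by
    simp only [h.smul_sub_alg, Finset.sum_sub_distrib, proj_apply]
    abel
  rw [hsplit]
  refine h.norm_le_norm_add_of_inner_eq_zero ?_
  rw [h.inner_conj, hq.inner_sum_smul_sub_proj_eq_zero, star_zero]

lemma IsOrthonormal.norm_proj_le (hq : h.IsOrthonormal q) (T : ℕ) (v : M) :
    ‖h.proj q T v‖ ≤ ‖v‖ := by
  have hle := h.norm_le_norm_add_of_inner_eq_zero
    (hq.inner_sum_smul_sub_proj_eq_zero T (fun t => h.inner (q t) v) v)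
  rwa [← proj_apply, add_sub_cancel] at hle

lemma IsOrthonormal.tendsto_proj (hq : h.IsOrthonormal q) (hdense : Dense (h.span q : Set M))
    (v : M) : Tendsto (fun T => h.proj q T v) atTop (𝓝 v) := by
  refine tendsto_iff_norm_sub_tendsto_zero.mpr (Metric.tendsto_atTop.mpr fun ε hε => ?_)
  obtain ⟨_, ⟨s, c, rfl⟩, hw⟩ := Metric.mem_closure_iff.mp (hdense v) ε hε
  obtain ⟨N, hN⟩ := s.exists_nat_subset_range
  refine ⟨N, fun T hT => ?_⟩
  rw [Real.dist_eq, sub_zero, abs_norm, norm_sub_rev]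
  calc ‖v - h.proj q T v‖
      ≤ ‖v - ∑ t ∈ Finset.range T, h.smul (q t) (if t ∈ s then c t else 0)‖ :=
        hq.norm_sub_proj_le v T _
    _ < ε := by
        rwa [← h.sum_smul_eq_sum_smul_ite q (hN.trans (Finset.range_subset_range.mpr hT)),
          ← dist_eq_norm]

end HilbertModuleMat

open HilbertModuleMat

theorem compression_strong_convergence_general
    {m : ℕ} {X : Type*} [TopologicalSpace X]
    {M : Type*} [NormedAddCommGroup M]
    (h : HilbertModuleMat m M)
    (φ : (Fin m → X) → M) (hφcont : Continuous φ)
    (hφdense : Dense {v : M | ∃ (n : ℕ) (y : Fin n → (Fin m → X))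
        (c : Fin n → Matrix (Fin m) (Fin m) ℂ), v = ∑ t, h.smul (φ (y t)) (c t)})
    (x : ℕ → (Fin m → X)) (hxdense : Dense (Set.range x))
    (q : ℕ → M)
    (horth : ∀ s t, s ≠ t → h.inner (q s) (q t) = 0)
    (hnorm : ∀ t, q t = 0 ∨ h.Normalized (q t))
    (hwspan : ∀ t : ℕ, ∃ c : Fin (t + 1) → Matrix (Fin m) (Fin m) ℂ,
      φ (x t) = ∑ s : Fin (t + 1), h.smul (q s.val) (c s))
    (K : M → M)
    (Kadd : ∀ u v, K (u + v) = K u + K v)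
    (C : ℝ) (Kbound : ∀ u, ‖K u‖ ≤ C * ‖u‖) :
    Dense {v : M | ∃ (s : Finset ℕ) (c : ℕ → Matrix (Fin m) (Fin m) ℂ),
      v = ∑ t ∈ s, h.smul (q t) (c t)} ∧
    ∀ v : M, Filter.Tendsto
      (fun T : ℕ => ‖K v -
        ∑ t ∈ Finset.range T, h.smul (q t) (h.inner (q t)
          (K (∑ s ∈ Finset.range T, h.smul (q s) (h.inner (q s) v))))‖)
      Filter.atTop (nhds 0) := by
  have hq : h.IsOrthonormal q := ⟨horth, fun t => h.isIdempotentElem_inner_self (hnorm t)⟩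
  have hdense : Dense (h.span q : Set M) := by
    refine h.dense_of_feature_mem hφcont hφdense (fun u hu c => h.smul_mem_span q hu c) hxdense ?_
    rintro _ ⟨t, rfl⟩
    obtain ⟨c, hc⟩ := hwspan t
    exact hc ▸ (h.span q).sum_mem fun s _ => h.smul_mem_span q (h.mem_span_self q s) (c s)
  refine ⟨hdense, fun v => ?_⟩
  have hlim := AddMonoidHom.tendsto_comp_comp_of_tendsto hq.norm_proj_le
    (hq.tendsto_proj hdense) (AddMonoidHom.mk' K Kadd) Kbound v
  exact (tendsto_iff_norm_sub_tendsto_zero.mp hlim).congr fun T => norm_sub_rev _ _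

/-- Strong convergence of the compressed Perron–Frobenius operator: if `k̃` is continuous,
the orbit `{x_t}` is dense in `X^m`, the feature map `φ` is continuous with dense
`ℂ^{m×m}`-linear span (the RKHM property), `{q_t}` is the exact (`ε = 0`) Gram–Schmidt
orthonormal system built from `{φ(x_t)}`, and `K` is a bounded `ℂ^{m×m}`-linear operator,
then `{q_t}` is an orthonormal basis and `Q_T Q_T* K Q_T Q_T* → K` strongly. -/
theorem compression_strong_convergence
    {m : ℕ} {X : Type*} [TopologicalSpace X]
    {M : Type*} [NormedAddCommGroup M] [CompleteSpace M]
    (h : HilbertModuleMat m M)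
    (ktilde : X → X → ℂ) (hk : Continuous fun p : X × X => ktilde p.1 p.2)
    (φ : (Fin m → X) → M) (hφcont : Continuous φ)
    (hφk : ∀ x y : Fin m → X,
      h.inner (φ x) (φ y) = Matrix.of fun i j => ktilde (x i) (y j))
    (hφdense : Dense {v : M | ∃ (n : ℕ) (y : Fin n → (Fin m → X))
        (c : Fin n → Matrix (Fin m) (Fin m) ℂ), v = ∑ t, h.smul (φ (y t)) (c t)})
    (x : ℕ → (Fin m → X)) (hxdense : Dense (Set.range x))
    (q : ℕ → M)
    (horth : ∀ s t, s ≠ t → h.inner (q s) (q t) = 0)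
    (hnorm : ∀ t, q t = 0 ∨ h.Normalized (q t))
    (hqspan : ∀ t : ℕ, ∃ c : Fin (t + 1) → Matrix (Fin m) (Fin m) ℂ,
      q t = ∑ s : Fin (t + 1), h.smul (φ (x s.val)) (c s))
    (hwspan : ∀ t : ℕ, ∃ c : Fin (t + 1) → Matrix (Fin m) (Fin m) ℂ,
      φ (x t) = ∑ s : Fin (t + 1), h.smul (q s.val) (c s))
    (K : M → M)
    (Kadd : ∀ u v, K (u + v) = K u + K v)
    (Ksmul : ∀ u c, K (h.smul u c) = h.smul (K u) c)
    (C : ℝ) (Kbound : ∀ u, ‖K u‖ ≤ C * ‖u‖) :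
    Dense {v : M | ∃ (s : Finset ℕ) (c : ℕ → Matrix (Fin m) (Fin m) ℂ),
      v = ∑ t ∈ s, h.smul (q t) (c t)} ∧
    ∀ v : M, Filter.Tendsto
      (fun T : ℕ => ‖K v -
        ∑ t ∈ Finset.range T, h.smul (q t) (h.inner (q t)
          (K (∑ s ∈ Finset.range T, h.smul (q s) (h.inner (q s) v))))‖)
      Filter.atTop (nhds 0) :=
  compression_strong_convergence_general h φ hφcont hφdense x hxdense q horth hnorm hwspan K Kadd C
    Kbound
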